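/- In the Koszul complex (R₅, d) of the pentagon, set t = u₁u₂u₃ ⊗ v₄v₅. Each of the ten elements u₁ ⊗ v₃, u₂ ⊗ v₄, u₃ ⊗ v₅, u₄ ⊗ v₁, u₅ ⊗ v₂, u₄u₅ ⊗ v₂, u₁u₅ ⊗ v₃, u₁u₂ ⊗ v₄, u₂u₃ ⊗ v₅, u₃u₄ ⊗ v₁ is a cocycle, and the following five products represent the class of t, i.e. each of the differences (u₁ ⊗ v₃)·(u₄u₅ ⊗ v₂) − t, (u₂ ⊗ v₄)·(−u₁u₅ ⊗ v₃) − t, (u₃ ⊗ v₅)·(u₁u₂ ⊗ v₄) − t, (u₄ ⊗ v₁)·(u₂u₃ ⊗ v₅) − t, (u₅ ⊗ v₂)·(u₃u₄ ⊗ v₁) − t lies in the image of d. -/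

import Mathlib

open scoped TensorProduct

/-- The exterior algebra `Λ[u₁,…,u₅]` over `ℤ`. -/
abbrev Ext5 := ExteriorAlgebra ℤ (Fin 5 → ℤ)

/-- The face ring `ℤ[K₅]` of the pentagon boundary complex: `ℤ[v₁,…,v₅]` modulo the
monomials `vᵢvⱼ` for the non-edges `{1,3},{1,4},{2,4},{2,5},{3,5}`, i.e. `vᵢv_{i+2}`
for all `i` (indices cyclic in `Fin 5`). -/
abbrev FaceRing5 := MvPolynomial (Fin 5) ℤ ⧸
  Ideal.span (Set.range fun i : Fin 5 =>
    (MvPolynomial.X i * MvPolynomial.X (i + 2) : MvPolynomial (Fin 5) ℤ))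

/-- The Koszul algebra `R₅ = Λ[u₁,…,u₅] ⊗_ℤ ℤ[K₅]`, with the `uᵢ` anticommuting with
each other and commuting with the `vⱼ`. -/
abbrev R5 := Ext5 ⊗[ℤ] FaceRing5

/-- The exterior generators `u₁,…,u₅` (indexed by `Fin 5`). -/
noncomputable def ug (i : Fin 5) : Ext5 := ExteriorAlgebra.ι ℤ (Pi.single i 1)

/-- The polynomial generators `v₁,…,v₅` of the face ring (indexed by `Fin 5`). -/
noncomputable def vg (i : Fin 5) : FaceRing5 :=
  Ideal.Quotient.mk _ (MvPolynomial.X i)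

/-- The submodule of exterior-degree-`p` elements of `Λ[u₁,…,u₅]`. -/
noncomputable def extDeg (p : ℕ) : Submodule ℤ Ext5 :=
  (LinearMap.range (ExteriorAlgebra.ι ℤ : (Fin 5 → ℤ) →ₗ[ℤ] Ext5)) ^ p

/-- `d` is the Koszul differential: a `ℤ`-linear map with `d(uᵢ ⊗ 1) = 1 ⊗ vᵢ`,
`d(1 ⊗ vᵢ) = 0`, satisfying the graded Leibniz rule
`d(ab) = (da)b + (−1)^p a(db)` for `a = x ⊗ m` with `x` of exterior degree `p`.
(These properties determine `d` uniquely.) -/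
def IsKoszulD (d : R5 →ₗ[ℤ] R5) : Prop :=
  (∀ i : Fin 5, d (ug i ⊗ₜ[ℤ] 1) = 1 ⊗ₜ[ℤ] vg i) ∧
  (∀ i : Fin 5, d (1 ⊗ₜ[ℤ] vg i) = 0) ∧
  (∀ (p : ℕ) (x : Ext5), x ∈ extDeg p → ∀ (m : FaceRing5) (b : R5),
    d ((x ⊗ₜ[ℤ] m) * b) = d (x ⊗ₜ[ℤ] m) * b + ((-1 : ℤ) ^ p) • ((x ⊗ₜ[ℤ] m) * d b))

/-! Indices are read in `ℤ/5` and start at `0`. Everything is an instance of one cyclically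
symmetric pattern: `cocycle₃ k = uₖ ⊗ vₖ₊₂` and `cocycle₄ k = uₖ₊₃uₖ₊₄ ⊗ vₖ₊₁` are the given
elements (`cocycle₄ 1 = -b₂`), and their product is `edgeCocycle (k + 1)`, where
`edgeCocycle i = uᵢ₊₂uᵢ₊₃uᵢ₊₄ ⊗ vᵢvᵢ₊₁` belongs to the edge `{i, i+1}`; `t = edgeCocycle 3`.
Each term of the differential of these elements contains a non-edge monomial `vⱼvⱼ₊₂`, so they
are cocycles. In `d (uᵢ₊₂uᵢ₊₃uᵢ₊₄uᵢ ⊗ vᵢ₊₁)` two of the four Koszul terms vanish for the same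
reason, leaving `edgeCocycle (i + 1) - edgeCocycle i`; going around the pentagon, all edge
cocycles are cohomologous. -/

lemma ExteriorAlgebra.ι_mul_ι_comm {R M : Type*} [CommRing R] [AddCommGroup M] [Module R M]
    (x y : M) : ι R x * ι R y = -(ι R y * ι R x) :=
  eq_neg_of_add_eq_zero_left (ι_add_mul_swap x y)

lemma ExteriorAlgebra.ι_mul_ι_mul_ι_comm {R M : Type*} [CommRing R] [AddCommGroup M]
    [Module R M] (x y z : M) : ι R x * (ι R y * ι R z) = ι R y * ι R z * ι R x := by
  rw [← mul_assoc, ι_mul_ι_comm x y, neg_mul, mul_assoc, ι_mul_ι_comm x z, mul_neg, neg_neg,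
    mul_assoc]

lemma Fin.apply_eq_apply_of_apply_add_one {n : ℕ} {α : Type*} {g : Fin (n + 1) → α}
    (h : ∀ i, g (i + 1) = g i) (i j : Fin (n + 1)) : g i = g j := by
  have h₀ (i : Fin (n + 1)) : g i = g 0 := by
    induction i using Fin.induction with
    | zero => rfl
    | succ i ih => rw [← Fin.coeSucc_eq_succ, h, ih]
  rw [h₀ i, h₀ j]

lemma vg_mul_vg_add_two (i : Fin 5) : vg i * vg (i + 2) = 0 := by
  rw [vg, vg, ← map_mul]
  exact Ideal.Quotient.eq_zero_iff_mem.mpr (Ideal.subset_span ⟨i, rfl⟩)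

lemma vg_mul_vg_eq_zero {i j : Fin 5} (h : j = i + 2 ∨ i = j + 2) : vg i * vg j = 0 := by
  obtain rfl | rfl := h
  · exact vg_mul_vg_add_two i
  · rw [mul_comm, vg_mul_vg_add_two]

noncomputable def edgeCocycle (i : Fin 5) : R5 :=
  (ug (i + 2) * ug (i + 3) * ug (i + 4)) ⊗ₜ[ℤ] (vg i * vg (i + 1))

noncomputable def cocycle₃ (k : Fin 5) : R5 := ug k ⊗ₜ[ℤ] vg (k + 2)

noncomputable def cocycle₄ (k : Fin 5) : R5 := (ug (k + 3) * ug (k + 4)) ⊗ₜ[ℤ] vg (k + 1)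

lemma cocycle₃_mul_cocycle₄ (k : Fin 5) : cocycle₃ k * cocycle₄ k = edgeCocycle (k + 1) := by
  rw [cocycle₃, cocycle₄, edgeCocycle, Algebra.TensorProduct.tmul_mul_tmul, mul_comm (vg _)]
  unfold ug
  rw [ExteriorAlgebra.ι_mul_ι_mul_ι_comm]
  simp only [add_assoc, Fin.reduceAdd, add_zero]

namespace IsKoszulD

variable {d : R5 →ₗ[ℤ] R5} (hd : IsKoszulD d)
include hd

lemma map_ug_mul_tmul (i : Fin 5) (x : Ext5) (m : FaceRing5) :
    d ((ug i * x) ⊗ₜ[ℤ] m) = x ⊗ₜ[ℤ] (vg i * m) - (ug i ⊗ₜ[ℤ] 1) * d (x ⊗ₜ[ℤ] m) := by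
  have hu : ug i ∈ extDeg 1 := by
    rw [extDeg, pow_one]
    exact ⟨_, rfl⟩
  have h := hd.2.2 1 (ug i) hu 1 (x ⊗ₜ[ℤ] m)
  rw [Algebra.TensorProduct.tmul_mul_tmul, one_mul, hd.1, Algebra.TensorProduct.tmul_mul_tmul,
    one_mul] at h
  rw [h, pow_one, neg_one_smul, sub_eq_add_neg]

-- Keeping differentials as pure tensors avoids ring lemmas such as `mul_sub` in `R5`: they do not
-- match there, the `ℤ`-module structure of `FaceRing5` being `AddCommGroup.toIntModule`.
lemma map_ug_mul_tmul_of_map_tmul (i : Fin 5) {x y : Ext5} {m n : FaceRing5}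
    (h : d (x ⊗ₜ[ℤ] m) = y ⊗ₜ[ℤ] n) :
    d ((ug i * x) ⊗ₜ[ℤ] m) = x ⊗ₜ[ℤ] (vg i * m) - (ug i * y) ⊗ₜ[ℤ] n := by
  rw [hd.map_ug_mul_tmul, h, Algebra.TensorProduct.tmul_mul_tmul, one_mul]

lemma map_ug_tmul_vg (i j : Fin 5) : d (ug i ⊗ₜ[ℤ] vg j) = 1 ⊗ₜ[ℤ] (vg i * vg j) := by
  have h : d (1 ⊗ₜ[ℤ] vg j) = (0 : Ext5) ⊗ₜ[ℤ] (1 : FaceRing5) := by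
    rw [hd.2.1, TensorProduct.zero_tmul]
  rw [← mul_one (ug i), hd.map_ug_mul_tmul_of_map_tmul i h, mul_zero, TensorProduct.zero_tmul,
    sub_zero]

lemma map_ug_mul_ug_tmul_vg (i j k : Fin 5) :
    d ((ug i * ug j) ⊗ₜ[ℤ] vg k) = ug j ⊗ₜ[ℤ] (vg i * vg k) - ug i ⊗ₜ[ℤ] (vg j * vg k) := by
  rw [hd.map_ug_mul_tmul_of_map_tmul i (hd.map_ug_tmul_vg j k), mul_one]

lemma map_cocycle₃ (k : Fin 5) : d (cocycle₃ k) = 0 := by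
  rw [cocycle₃, hd.map_ug_tmul_vg, vg_mul_vg_eq_zero (Or.inl rfl), TensorProduct.tmul_zero]

lemma map_cocycle₄ (k : Fin 5) : d (cocycle₄ k) = 0 := by
  rw [cocycle₄, hd.map_ug_mul_ug_tmul_vg, vg_mul_vg_eq_zero (i := k + 4) (by grind),
    vg_mul_vg_eq_zero (i := k + 3) (by grind), TensorProduct.tmul_zero, TensorProduct.tmul_zero,
    sub_zero]

lemma map_tmul_eq_edgeCocycle_sub (i : Fin 5) :
    d ((ug (i + 2) * ug (i + 3) * ug (i + 4) * ug i) ⊗ₜ[ℤ] vg (i + 1)) =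
      edgeCocycle (i + 1) - edgeCocycle i := by
  have h₂ : d ((ug (i + 4) * ug i) ⊗ₜ[ℤ] vg (i + 1)) =
      (-ug (i + 4)) ⊗ₜ[ℤ] (vg i * vg (i + 1)) := by
    rw [hd.map_ug_mul_ug_tmul_vg, vg_mul_vg_eq_zero (i := i + 4) (by grind),
      TensorProduct.tmul_zero, zero_sub, TensorProduct.neg_tmul]
  have h₃ : d ((ug (i + 3) * (ug (i + 4) * ug i)) ⊗ₜ[ℤ] vg (i + 1)) =
      (ug (i + 3) * ug (i + 4)) ⊗ₜ[ℤ] (vg i * vg (i + 1)) := by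
    rw [hd.map_ug_mul_tmul_of_map_tmul _ h₂, vg_mul_vg_eq_zero (i := i + 3) (by grind),
      TensorProduct.tmul_zero, zero_sub, mul_neg, TensorProduct.neg_tmul, neg_neg]
  rw [mul_assoc, mul_assoc, hd.map_ug_mul_tmul_of_map_tmul _ h₃, edgeCocycle, edgeCocycle,
    mul_comm (vg _) (vg (i + 1))]
  simp only [add_assoc, Fin.reduceAdd, add_zero, mul_assoc]

lemma edgeCocycle_sub_mem_range (i j : Fin 5) :
    edgeCocycle i - edgeCocycle j ∈ LinearMap.range d := by
  rw [← Submodule.Quotient.eq]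
  refine Fin.apply_eq_apply_of_apply_add_one (g := fun i => Submodule.Quotient.mk (edgeCocycle i))
    (fun i => ?_) i j
  exact (Submodule.Quotient.eq _).2 ⟨_, hd.map_tmul_eq_edgeCocycle_sub i⟩

lemma cocycle₃_mul_cocycle₄_sub_mem_range (k j : Fin 5) :
    cocycle₃ k * cocycle₄ k - edgeCocycle j ∈ LinearMap.range d := by
  rw [cocycle₃_mul_cocycle₄]
  exact hd.edgeCocycle_sub_mem_range _ _

end IsKoszulD

/-- In the Koszul complex `(R₅, d)` of the pentagon, with `t = u₁u₂u₃ ⊗ v₄v₅`,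
the ten elements `u₁ ⊗ v₃, u₂ ⊗ v₄, u₃ ⊗ v₅, u₄ ⊗ v₁, u₅ ⊗ v₂, u₄u₅ ⊗ v₂,
u₁u₅ ⊗ v₃, u₁u₂ ⊗ v₄, u₂u₃ ⊗ v₅, u₃u₄ ⊗ v₁` are cocycles and the five products
`(u₁ ⊗ v₃)(u₄u₅ ⊗ v₂)`, `(u₂ ⊗ v₄)(−u₁u₅ ⊗ v₃)`, `(u₃ ⊗ v₅)(u₁u₂ ⊗ v₄)`,
`(u₄ ⊗ v₁)(u₂u₃ ⊗ v₅)`, `(u₅ ⊗ v₂)(u₃u₄ ⊗ v₁)` all represent the class of `t`. -/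
theorem pentagon_products_represent_top_class (d : R5 →ₗ[ℤ] R5) (hd : IsKoszulD d) :
    let t : R5 := (ug 0 * ug 1 * ug 2) ⊗ₜ[ℤ] (vg 3 * vg 4)
    let a₁ : R5 := ug 0 ⊗ₜ[ℤ] vg 2
    let a₂ : R5 := ug 1 ⊗ₜ[ℤ] vg 3
    let a₃ : R5 := ug 2 ⊗ₜ[ℤ] vg 4
    let a₄ : R5 := ug 3 ⊗ₜ[ℤ] vg 0
    let a₅ : R5 := ug 4 ⊗ₜ[ℤ] vg 1
    let b₁ : R5 := (ug 3 * ug 4) ⊗ₜ[ℤ] vg 1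
    let b₂ : R5 := (ug 0 * ug 4) ⊗ₜ[ℤ] vg 2
    let b₃ : R5 := (ug 0 * ug 1) ⊗ₜ[ℤ] vg 3
    let b₄ : R5 := (ug 1 * ug 2) ⊗ₜ[ℤ] vg 4
    let b₅ : R5 := (ug 2 * ug 3) ⊗ₜ[ℤ] vg 0
    ((d a₁ = 0 ∧ d a₂ = 0 ∧ d a₃ = 0 ∧ d a₄ = 0 ∧ d a₅ = 0 ∧
      d b₁ = 0 ∧ d b₂ = 0 ∧ d b₃ = 0 ∧ d b₄ = 0 ∧ d b₅ = 0) ∧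
     (a₁ * b₁ - t ∈ LinearMap.range d ∧
      a₂ * (-b₂) - t ∈ LinearMap.range d ∧
      a₃ * b₃ - t ∈ LinearMap.range d ∧
      a₄ * b₄ - t ∈ LinearMap.range d ∧
      a₅ * b₅ - t ∈ LinearMap.range d)) := by
  intro t a₁ a₂ a₃ a₄ a₅ b₁ b₂ b₃ b₄ b₅
  have hb₂ : b₂ = -cocycle₄ 1 := by
    rw [cocycle₄, ← TensorProduct.neg_tmul]
    unfold ug
    rw [ExteriorAlgebra.ι_mul_ι_comm, neg_neg]
    rfl
  refine ⟨⟨hd.map_cocycle₃ 0, hd.map_cocycle₃ 1, hd.map_cocycle₃ 2, hd.map_cocycle₃ 3,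
    hd.map_cocycle₃ 4, hd.map_cocycle₄ 0, ?_, hd.map_cocycle₄ 2, hd.map_cocycle₄ 3,
    hd.map_cocycle₄ 4⟩, hd.cocycle₃_mul_cocycle₄_sub_mem_range 0 3, ?_,
    hd.cocycle₃_mul_cocycle₄_sub_mem_range 2 3, hd.cocycle₃_mul_cocycle₄_sub_mem_range 3 3,
    hd.cocycle₃_mul_cocycle₄_sub_mem_range 4 3⟩
  · rw [hb₂, map_neg, hd.map_cocycle₄, neg_zero]
  · rw [hb₂, neg_neg]
    exact hd.cocycle₃_mul_cocycle₄_sub_mem_range 1 3
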